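/- arXiv:1510.00057 — 3 statements merged into one kernel-verified Lean document; each statement's English description precedes it below -/
import Mathlib

section
/- Let G be a group with a finite normal subgroup K such that G/K is abelian. Then for every g ∈ G, the element g^N with N = |K|!·|K| lies in the center of G. -/
/-- If `K` is a finite normal subgroup of `G` with abelian quotient `G/K`, then for every
`g ∈ G` the element `g ^ (|K|!·|K|)` is central in `G`. -/
theorem stmt2 {G : Type*} [Group G] (K : Subgroup G) [K.Normal] [Finite K]
    (hab : ∀ x y : G ⧸ K, x * y = y * x) (g : G) :
    g ^ (Nat.factorial (Nat.card K) * Nat.card K) ∈ Subgroup.center G := by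
  have := Fintype.ofFinite K
  set n := Nat.card K with hn
  set m := n.factorial with hm
  set a := g ^ m with ha
  -- `a` centralizes `K`
  have hcent : ∀ k : K, a * k * a⁻¹ = (k : G) := by
    intro k
    have h1 : (MulAut.conjNormal g : MulAut K) ^ m = 1 := by
      have hdvd : orderOf (MulAut.conjNormal g : MulAut K) ∣ m := by
        classical
        refine dvd_trans (orderOf_dvd_natCard _) ?_
        have h2 : Nat.card (MulAut K) ∣ Nat.card (Equiv.Perm K) := by
          have hinj : Function.Injective
              (MulAut.toPerm (M := K) : MulAut K →* Equiv.Perm K) := by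
            intro x y hxy
            ext z
            exact congrArg Subtype.val (Equiv.ext_iff.mp hxy z)
          have heq : Nat.card (MulAut K) =
              Nat.card (MulAut.toPerm (M := K)).range :=
            Nat.card_congr (MonoidHom.ofInjective hinj).toEquiv
          rw [heq]
          exact Subgroup.card_subgroup_dvd_card _
        have h3 : Nat.card (Equiv.Perm K) = m := by
          rw [hm, hn, Nat.card_eq_fintype_card, Nat.card_eq_fintype_card, Fintype.card_perm]
        rwa [h3] at h2
      exact orderOf_dvd_iff_pow_eq_one.mp hdvd
    have h4 : (MulAut.conjNormal a : MulAut K) = 1 := by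
      rw [ha, map_pow, h1]
    have h5 : (MulAut.conjNormal a : MulAut K) k = k := by rw [h4]; rfl
    calc a * k * a⁻¹ = ((MulAut.conjNormal a : MulAut K) k : G) := by
            rw [MulAut.conjNormal_apply]
      _ = (k : G) := by rw [h5]
  rw [Subgroup.mem_center_iff]
  intro h
  -- commutator lies in K
  have hc : a⁻¹ * h⁻¹ * a * h ∈ K := by
    rw [← QuotientGroup.eq_one_iff]
    simp only [QuotientGroup.mk_mul, QuotientGroup.mk_inv]
    rw [mul_assoc ((a : G ⧸ K))⁻¹, hab ((h : G ⧸ K))⁻¹ ((a : G ⧸ K))]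
    group
  set c : K := ⟨a⁻¹ * h⁻¹ * a * h, hc⟩ with hcdef
  have hconj : h⁻¹ * a * h = a * c := by
    simp only [hcdef]
    group
  have hcom : Commute a (c : G) := mul_inv_eq_iff_eq_mul.mp (hcent c)
  have hcn : (c : G) ^ n = 1 := by
    have : c ^ n = 1 := by rw [hn]; exact pow_card_eq_one'
    exact_mod_cast congrArg (Subtype.val) this
  have key : h⁻¹ * a ^ n * h = a ^ n := by
    have h6 : (h⁻¹ * a * h) ^ n = h⁻¹ * a ^ n * h := by
      have h7 := conj_pow (a := h⁻¹) (b := a) (i := n)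
      rwa [inv_inv] at h7
    rw [← h6, hconj, hcom.mul_pow, hcn, mul_one]
  have : g ^ (m * n) = a ^ n := by rw [ha, ← pow_mul]
  rw [this]
  have := key
  calc h * a ^ n = h * (h⁻¹ * a ^ n * h) := by rw [key]
    _ = a ^ n * h := by group
end

section
/- Let φ : G → ℤ^d be a surjective group homomorphism with finite kernel K. Then there exist a positive integer N and a group homomorphism j : ℤ^d → G such that φ ∘ j equals multiplication by N on ℤ^d. -/
/-- If `φ : G → ℤ^d` is a surjective homomorphism with finite kernel, then there exist a
positive integer `N` and a homomorphism `j : ℤ^d → G` with `φ ∘ j = N · id`. -/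
theorem stmt3 {G : Type*} [Group G] (d : ℕ)
    (φ : G →* Multiplicative (Fin d → ℤ))
    (hsurj : Function.Surjective φ) (hker : Finite φ.ker) :
    ∃ (N : ℕ) (j : Multiplicative (Fin d → ℤ) →* G), 0 < N ∧
      ∀ x, φ (j x) = x ^ N := by
  classical
  set K := φ.ker with hK
  set k := Nat.card K with hk
  have hkpos : 0 < k := Nat.card_pos
  set N := k.factorial * k with hN
  have hNpos : 0 < N := Nat.mul_pos (Nat.factorial_pos k) hkpos
  -- any element of the kernel commutes with `g ^ k!`
  have hcentral : ∀ g x : G, x ∈ K → Commute (g ^ k.factorial) x := by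
    intro g x hx
    have hinj : Function.Injective (MulAut.toPerm (M := K)) := fun a b h =>
      MulEquiv.ext fun m => Equiv.ext_iff.mp h m
    have hfin : Finite (MulAut K) := Finite.of_injective _ hinj
    have hdvd : Nat.card (MulAut K) ∣ k.factorial := by
      have := Subgroup.card_dvd_of_injective (MulAut.toPerm (M := K)) hinj
      have hcard : Nat.card (Equiv.Perm K) = k.factorial := by
        have := Fintype.ofFinite (K : Type _)
        rw [Nat.card_eq_fintype_card, Fintype.card_perm, ← Nat.card_eq_fintype_card]
      rwa [hcard] at this
    have h1 : (MulAut.conjNormal (G := G) (H := K) g) ^ k.factorial = 1 := by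
      have := orderOf_dvd_natCard (MulAut.conjNormal (G := G) (H := K) g)
      exact orderOf_dvd_iff_pow_eq_one.mp (this.trans hdvd)
    have h2 : MulAut.conjNormal (G := G) (H := K) (g ^ k.factorial) = 1 := by
      rw [map_pow, h1]
    have h3 : (g ^ k.factorial) * x * (g ^ k.factorial)⁻¹ = x := by
      have h3' := MulAut.conjNormal_apply (G := G) (g ^ k.factorial) (⟨x, hx⟩ : K)
      rw [h2] at h3'
      simpa using h3'.symm
    show g ^ k.factorial * x = x * g ^ k.factorial
    calc g ^ k.factorial * x
        = (g ^ k.factorial * x * (g ^ k.factorial)⁻¹) * g ^ k.factorial := by group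
      _ = x * g ^ k.factorial := by rw [h3]
  -- every commutator lies in the kernel
  have hcommK : ∀ a b : G, a * b * a⁻¹ * b⁻¹ ∈ K := by
    intro a b
    simp only [hK, MonoidHom.mem_ker, map_mul, map_inv]
    rw [mul_comm (φ a) (φ b)]
    group
  -- powers of commutators
  have hpow : ∀ a b : G, (∀ x ∈ K, Commute a x) →
      ∀ n : ℕ, a ^ n * b * (a ^ n)⁻¹ * b⁻¹ = (a * b * a⁻¹ * b⁻¹) ^ n := by
    intro a b hc n
    induction n with
    | zero => group
    | succ n ih =>
      have key : a ^ (n+1) * b * (a ^ (n+1))⁻¹ * b⁻¹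
          = a ^ n * (a * b * a⁻¹ * b⁻¹) * (a ^ n)⁻¹ * (a ^ n * b * (a ^ n)⁻¹ * b⁻¹) := by
        group
      have hcomm : Commute (a ^ n) (a * b * a⁻¹ * b⁻¹) :=
        (hc _ (hcommK a b)).pow_left n
      rw [key, ih, pow_succ', hcomm.eq]
      group
  -- N-th powers are central
  have hNcentral : ∀ a b : G, Commute (a ^ N) b := by
    intro a b
    have hc : ∀ x ∈ K, Commute (a ^ k.factorial) x := fun x hx => hcentral a x hx
    have h1 := hpow (a ^ k.factorial) b hc k
    have hcK : (a ^ k.factorial * b * (a ^ k.factorial)⁻¹ * b⁻¹) ∈ K := hcommK _ _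
    have h2 : (a ^ k.factorial * b * (a ^ k.factorial)⁻¹ * b⁻¹) ^ k = 1 := by
      have h2' := pow_card_eq_one' (G := K) (x := (⟨_, hcK⟩ : K))
      have h2'' := congrArg (Subtype.val) h2'
      rwa [SubmonoidClass.coe_pow, OneMemClass.coe_one] at h2''
    rw [h2, ← pow_mul] at h1
    have hone : a ^ N * b * (a ^ N)⁻¹ * b⁻¹ = 1 := by rw [hN]; exact h1
    show a ^ N * b = b * a ^ N
    calc a ^ N * b = (a ^ N * b * (a ^ N)⁻¹ * b⁻¹) * (b * a ^ N) := by group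
      _ = b * a ^ N := by rw [hone]; group
  -- choose preimages of basis vectors
  choose g hg using hsurj
  set e : Multiplicative (Fin d → ℤ) ≃* (Fin d → Multiplicative ℤ) :=
    MulEquiv.piMultiplicative (fun _ : Fin d => ℤ) with he
  set b : Fin d → Multiplicative (Fin d → ℤ) :=
    fun i => Multiplicative.ofAdd (Pi.single i (1 : ℤ)) with hb
  set ϕ : ∀ _ : Fin d, Multiplicative ℤ →* G := fun i => zpowersHom G (g (b i) ^ N) with hϕ
  have hcomm : Pairwise fun i j => ∀ x y, Commute (ϕ i x) (ϕ j y) := by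
    intro i j _
    intro x y
    simp only [hϕ, zpowersHom_apply]
    exact ((hNcentral (g (b i)) _).zpow_left _).zpow_right _
  refine ⟨N, (MonoidHom.noncommPiCoprod ϕ hcomm).comp e.toMonoidHom, hNpos, ?_⟩
  intro x
  simp only [MonoidHom.comp_apply, MulEquiv.coe_toMonoidHom,
    MonoidHom.noncommPiCoprod_apply]
  rw [Finset.map_noncommProd _ _ _ φ, Finset.noncommProd_eq_prod]
  have hterm : ∀ i, φ (ϕ i (e x i)) =
      Multiplicative.ofAdd (Pi.single i ((N : ℤ) * Multiplicative.toAdd x i)) := by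
    intro i
    simp only [hϕ, zpowersHom_apply, he, MulEquiv.piMultiplicative_apply]
    rw [map_zpow, map_pow, hg]
    rw [hb, ← ofAdd_nsmul, ← ofAdd_zsmul]
    congr 1
    ext j
    simp [Pi.single_apply, mul_comm]
  rw [Finset.prod_congr rfl (fun i _ => hterm i)]
  apply Multiplicative.toAdd.injective
  rw [toAdd_prod, toAdd_pow]
  simp only [toAdd_ofAdd]
  ext j
  simp [Pi.single_apply, Finset.sum_ite_eq', mul_comm]
end

section
/- Let G be a group, g ∈ G, and V a finite-dimensional complex representation of G. If C_* is a bounded complex of finitely generated free ℂG-modules with Euler characteristic χ := Σ_n (−1)^n rk(C_n) = 0, then for any two ℂG-bases of each C_n that differ by permutations, signs, and multiplication of basis elements by group elements, the alternating product over n of the products of |det_ℂ(l_{g(b)} : V → V)| over the translating group elements g(b) depends only on the image of Π g(b)^{(−1)^n} in H₁(G)/torsion; in particular, if additionally the homomorphism D_V : H₁(G)_f → ℝ, ḡ ↦ ln|det_ℂ(l_g : V → V)| vanishes, this alternating product equals 1. -/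
/-!
`g ↦ |det ρ(g)|` is a homomorphism into the torsion-free abelian group of positive reals, so
it factors through `H₁(G)_f = Abelianization G ⧸ torsion`. Applying the factored map to the
two equal images of `∏_n (∏_b g(b))^{(-1)^n}` gives the equality of the alternating products
of determinants.
-/

open NNReal CommGroup

section TorsionFree

variable {G M : Type*} [Group G] [CommGroup M] [IsMulTorsionFree M]

lemma CommGroup.torsion_le_ker {A : Type*} [CommGroup A] (f : A →* M) : torsion A ≤ f.ker :=
  fun _ hx => by
    simpa [isMulTorsionFree_iff_torsion_eq_bot.mp ‹_›] using le_comap_torsion f hx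

def Abelianization.liftModTorsion (φ : G →* M) :
    Abelianization G ⧸ torsion (Abelianization G) →* M :=
  QuotientGroup.lift _ (Abelianization.lift φ) (torsion_le_ker _)

@[simp]
lemma Abelianization.liftModTorsion_mk_of (φ : G →* M) (g : G) :
    liftModTorsion φ (QuotientGroup.mk' (torsion (Abelianization G)) (of g)) = φ g :=
  rfl

end TorsionFree

namespace Representation

variable {k G V : Type*} [NormedField k] [Group G] [AddCommGroup V] [Module k V]

noncomputable def normDet (ρ : Representation k G V) : G →* ℝ≥0ˣ :=
  (nnnormHom.toMonoidHom.comp (LinearMap.det.comp ρ)).toHomUnits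

@[simp]
lemma coe_normDet (ρ : Representation k G V) (g : G) :
    ((ρ.normDet g : ℝ≥0) : ℝ) = ‖LinearMap.det (ρ g)‖ :=
  rfl

end Representation

theorem stmt18_general {G : Type*} [Group G] {V : Type*} [AddCommGroup V] [Module ℂ V]
    (ρ : Representation ℂ G V)
    (N : ℕ) (r r' : Fin N → ℕ)
    (g : (n : Fin N) → Fin (r n) → G) (g' : (n : Fin N) → Fin (r' n) → G)
    (htrans :
      (∏ n : Fin N, (∏ b, (QuotientGroup.mk' (CommGroup.torsion (Abelianization G)))
          (Abelianization.of (g n b))) ^ ((-1 : ℤ) ^ (n : ℕ)))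
      = ∏ n : Fin N, (∏ b, (QuotientGroup.mk' (CommGroup.torsion (Abelianization G)))
          (Abelianization.of (g' n b))) ^ ((-1 : ℤ) ^ (n : ℕ))) :
    (∏ n : Fin N, (∏ b, ‖LinearMap.det (ρ (g n b))‖) ^ ((-1 : ℤ) ^ (n : ℕ)))
      = (∏ n : Fin N,
          (∏ b, ‖LinearMap.det (ρ (g' n b))‖) ^ ((-1 : ℤ) ^ (n : ℕ))) ∧
    ((∀ h : G, ‖LinearMap.det (ρ h)‖ = 1) →
      (∏ n : Fin N,
        (∏ b, ‖LinearMap.det (ρ (g n b))‖) ^ ((-1 : ℤ) ^ (n : ℕ))) = 1) := by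
  have key := congrArg
    (fun x => ((Abelianization.liftModTorsion ρ.normDet x : ℝ≥0) : ℝ)) htrans
  simp only [map_prod, map_zpow, Abelianization.liftModTorsion_mk_of, Units.val_zpow_eq_zpow_val,
    Units.coe_prod, NNReal.coe_zpow, NNReal.coe_prod, Representation.coe_normDet] at key
  exact ⟨key, fun hD => by simp [hD]⟩

/-- Given a finite-dimensional complex representation `ρ` of `G` and, for each degree
`n < N`, a family of translating group elements `g n b` (resp. `g' n b`) coming from two
cellularly equivalent choices of bases of a based complex with vanishing Euler
characteristic, the alternating product `∏_n (∏_b |det(l_{g n b})|)^{(−1)^n}` depends only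
on the image of `∏_n (∏_b g n b)^{(−1)^n}` in `H₁(G)_f = Abelianization(G)/torsion`.
In particular, if `D_V` vanishes (i.e. `|det(l_h)| = 1` for all `h`), the alternating
product equals `1`. -/
theorem stmt18 {G : Type*} [Group G] {V : Type*} [AddCommGroup V] [Module ℂ V]
    [FiniteDimensional ℂ V] (ρ : Representation ℂ G V)
    (N : ℕ) (r r' : Fin N → ℕ)
    (g : (n : Fin N) → Fin (r n) → G) (g' : (n : Fin N) → Fin (r' n) → G)
    (hχ : ∑ n : Fin N, (-1 : ℤ) ^ (n : ℕ) * (r n : ℤ) = 0)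
    (hχ' : ∑ n : Fin N, (-1 : ℤ) ^ (n : ℕ) * (r' n : ℤ) = 0)
    (htrans :
      (∏ n : Fin N, (∏ b, (QuotientGroup.mk' (CommGroup.torsion (Abelianization G)))
          (Abelianization.of (g n b))) ^ ((-1 : ℤ) ^ (n : ℕ)))
      = ∏ n : Fin N, (∏ b, (QuotientGroup.mk' (CommGroup.torsion (Abelianization G)))
          (Abelianization.of (g' n b))) ^ ((-1 : ℤ) ^ (n : ℕ))) :
    (∏ n : Fin N, (∏ b, ‖LinearMap.det (ρ (g n b))‖) ^ ((-1 : ℤ) ^ (n : ℕ)))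
      = (∏ n : Fin N,
          (∏ b, ‖LinearMap.det (ρ (g' n b))‖) ^ ((-1 : ℤ) ^ (n : ℕ))) ∧
    ((∀ h : G, ‖LinearMap.det (ρ h)‖ = 1) →
      (∏ n : Fin N,
        (∏ b, ‖LinearMap.det (ρ (g n b))‖) ^ ((-1 : ℤ) ^ (n : ℕ))) = 1) :=
  stmt18_general ρ N r r' g g' htrans
end
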